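/- Let ξ > 0 and let ξΣ̂ − Z = U diag(σ) Uᵀ be an eigendecomposition with U orthogonal. Define R = U diag(γ) Uᵀ where γᵢ = (−σᵢ + √(σᵢ² + 4ξ))/2. Then R is positive definite and satisfies the first-order optimality condition R + ξΣ̂ − Z − ξR⁻¹ = 0. -/

import Mathlib

open Matrix

/-! `γ = (-σ + √(σ² + 4ξ)) / 2` is the positive root of `γ² + σγ = ξ`, so in the eigenbasis of
`ξΣ̂ - Z` the optimality condition reads `γ + σ - ξ/γ = 0` entrywise. We prove it in the form
`R (R + ξΣ̂ - Z) = ξ • 1`, which identifies `ξ R⁻¹` with `R + ξΣ̂ - Z`. -/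

section QuadraticRoot

variable {s ξ : ℝ}

lemma quadraticRoot_pos (hξ : 0 < ξ) : 0 < (-s + √(s ^ 2 + 4 * ξ)) / 2 := by
  have h : |s| < √(s ^ 2 + 4 * ξ) := by
    rw [← Real.sqrt_sq_eq_abs]
    exact Real.sqrt_lt_sqrt (sq_nonneg s) (by linarith)
  linarith [le_abs_self s]

lemma quadraticRoot_mul_add_self (hξ : 0 ≤ ξ) :
    (-s + √(s ^ 2 + 4 * ξ)) / 2 * ((-s + √(s ^ 2 + 4 * ξ)) / 2 + s) = ξ := by
  have h := Real.sq_sqrt (by positivity : 0 ≤ s ^ 2 + 4 * ξ)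
  linear_combination h / 4

end QuadraticRoot

section OrthogonalConj

variable {n : Type*} [Fintype n] [DecidableEq n]

lemma Matrix.conj_mul_conj {α : Type*} [CommRing α] {U : Matrix n n α} (hU : Uᵀ * U = 1)
    (A B : Matrix n n α) : (U * A * Uᵀ) * (U * B * Uᵀ) = U * (A * B) * Uᵀ := by
  simp only [Matrix.mul_assoc]
  rw [← Matrix.mul_assoc Uᵀ, hU, Matrix.one_mul]

lemma Matrix.PosDef.orthogonal_conj {A U : Matrix n n ℝ} (hA : A.PosDef) (hU : U * Uᵀ = 1) :
    (U * A * Uᵀ).PosDef := by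
  have hinj : Function.Injective U.vecMul :=
    Function.LeftInverse.injective (g := Uᵀ.vecMul) fun v => by
      simp only [vecMul_vecMul, hU, vecMul_one]
  simpa [conjTranspose_eq_transpose_of_trivial] using hA.mul_mul_conjTranspose_same hinj

end OrthogonalConj

theorem stmt1_general (p : ℕ) (ξ : ℝ) (hξ : 0 < ξ)
    (Sig Z U : Matrix (Fin p) (Fin p) ℝ) (σ γ : Fin p → ℝ)
    (hU : U * Uᵀ = 1) (hU' : Uᵀ * U = 1)
    (hdecomp : ξ • Sig - Z = U * Matrix.diagonal σ * Uᵀ)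
    (hγ : ∀ i, γ i = (-σ i + Real.sqrt (σ i ^ 2 + 4 * ξ)) / 2)
    (R : Matrix (Fin p) (Fin p) ℝ) (hR : R = U * Matrix.diagonal γ * Uᵀ) :
    R.PosDef ∧ R + ξ • Sig - Z - ξ • R⁻¹ = 0 := by
  have hRpd : R.PosDef :=
    hR ▸ (PosDef.diagonal fun i => hγ i ▸ quadraticRoot_pos hξ).orthogonal_conj hU
  have hquad : diagonal γ * (diagonal γ + diagonal σ) = ξ • 1 := by
    rw [smul_one_eq_diagonal, diagonal_add, diagonal_mul_diagonal]
    exact congrArg diagonal (funext fun i => hγ i ▸ quadraticRoot_mul_add_self hξ.le)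
  have hmul : R * (R + (ξ • Sig - Z)) = ξ • 1 := by
    rw [hdecomp, hR, ← Matrix.add_mul, ← Matrix.mul_add, conj_mul_conj hU', hquad,
      Matrix.mul_smul, Matrix.mul_one, Matrix.smul_mul, hU]
  have hinv : ξ • R⁻¹ = R + (ξ • Sig - Z) := by
    have hright : R * (ξ⁻¹ • (R + (ξ • Sig - Z))) = 1 := by
      rw [Matrix.mul_smul, hmul, smul_smul, inv_mul_cancel₀ hξ.ne', one_smul]
    rw [inv_eq_right_inv hright, smul_smul, mul_inv_cancel₀ hξ.ne', one_smul]
  refine ⟨hRpd, ?_⟩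
  rw [hinv]
  abel

theorem stmt1 (p : ℕ) (ξ : ℝ) (hξ : 0 < ξ)
    (Sig Z U : Matrix (Fin p) (Fin p) ℝ) (σ γ : Fin p → ℝ)
    (hSig : Sigᵀ = Sig) (hZ : Zᵀ = Z)
    (hU : U * Uᵀ = 1) (hU' : Uᵀ * U = 1)
    (hdecomp : ξ • Sig - Z = U * Matrix.diagonal σ * Uᵀ)
    (hγ : ∀ i, γ i = (-σ i + Real.sqrt (σ i ^ 2 + 4 * ξ)) / 2)
    (R : Matrix (Fin p) (Fin p) ℝ) (hR : R = U * Matrix.diagonal γ * Uᵀ) :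
    R.PosDef ∧ R + ξ • Sig - Z - ξ • R⁻¹ = 0 :=
  stmt1_general p ξ hξ Sig Z U σ γ hU hU' hdecomp hγ R hR
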